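/- If F : A ‚Üí k-Mod satisfies (RM)^d, then F satisfies (AH)^d: for every i ‚Č• 0, the cross effect cr_d(őļ_d^i F) : őļ_d^i F ‚Üí ŌĄ_d őļ_d^i F is injective, where őļ_d denotes the cokernel-of-cross-effect functor. -/

import Mathlib

open CategoryTheory CategoryTheory.Limits

noncomputable section

variable {A : Type*} [Category A] [Preadditive A] [HasFiniteBiproducts A]
variable {D : Type*} [Category D] [Preadditive D]

/-- `t d : a ↦ a^{⊕(d+1)}` -/
@[simps] def tFun (A : Type*) [Category A] [Preadditive A] [HasFiniteBiproducts A] (d : ℕ) :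
    A ⥤ A where
  obj a := ⨁ (fun _ : Fin (d + 1) => a)
  map f := biproduct.map (fun _ => f)

/-- `u_I : id ⟶ t_d` -/
@[simps] def uNat (A : Type*) [Category A] [Preadditive A] [HasFiniteBiproducts A] (d : ℕ)
    (I : Finset (Fin (d + 1))) : 𝟭 A ⟶ tFun A d where
  app a := biproduct.lift (fun i => if i ∈ I then 𝟙 a else 0)
  naturality a b f := by
    refine biproduct.hom_ext _ _ fun j => ?_
    by_cases h : j ∈ I <;> simp [h, tFun]

/-- `p_I : t_d ⟶ id` -/
@[simps] def pNat (A : Type*) [Category A] [Preadditive A] [HasFiniteBiproducts A] (d : ℕ)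
    (I : Finset (Fin (d + 1))) : tFun A d ⟶ 𝟭 A where
  app a := biproduct.desc (fun i => if i ∈ I then 𝟙 a else 0)
  naturality a b f := by
    refine biproduct.hom_ext' _ _ fun j => ?_
    by_cases h : j ∈ I <;> simp [h, tFun]

/-- the cross effect `cr_d(F) : F ⟶ τ_d F` -/
@[simps] def crNat (d : ℕ) (F : A ⥤ D) : F ⟶ tFun A d ⋙ F where
  app a := ∑ I : Finset (Fin (d + 1)), (-1 : ℤ) ^ I.card • F.map ((uNat A d I).app a)
  naturality a b f := by
    simp only [Functor.comp_map, Preadditive.comp_sum, Preadditive.sum_comp,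
      Preadditive.comp_zsmul, Preadditive.zsmul_comp]
    refine Finset.sum_congr rfl (fun I _ => ?_)
    have h := (uNat A d I).naturality f
    simp only [Functor.id_map] at h
    rw [← F.map_comp, ← F.map_comp, h]

/-- the co-cross effect `cr_d^{op}(F) : τ_d F ⟶ F` -/
@[simps] def crOpNat (d : ℕ) (F : A ⥤ D) : tFun A d ⋙ F ⟶ F where
  app a := ∑ I : Finset (Fin (d + 1)), (-1 : ℤ) ^ I.card • F.map ((pNat A d I).app a)
  naturality a b f := by
    simp only [Functor.comp_map, Preadditive.comp_sum, Preadditive.sum_comp,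
      Preadditive.comp_zsmul, Preadditive.zsmul_comp]
    refine Finset.sum_congr rfl (fun I _ => ?_)
    have h := (pNat A d I).naturality f
    simp only [Functor.id_map] at h
    rw [← F.map_comp, ← F.map_comp, h]

/-- `F` is polynomial of degree at most `d`. -/
def PolyDeg (d : ℕ) (F : A ⥤ D) : Prop := crNat d F = 0

end

section M0

variable (B : Type*) [Category B] [Limits.HasZeroMorphisms B]

/-- `M₀(B)` : same objects as `B`, morphisms the zero morphisms and split monomorphisms. -/
def M0 := B

instance : Category (M0 B) where
  Hom a b := {f : (show B from a) ⟶ (show B from b) // f = 0 ∨ IsSplitMono f}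
  id a := ⟨𝟙 _, Or.inr inferInstance⟩
  comp {a b c} f g := ⟨f.1 ≫ g.1, by
    rcases f.2 with hf | hf
    · exact Or.inl (by rw [hf, Limits.zero_comp])
    · rcases g.2 with hg | hg
      · exact Or.inl (by rw [hg, Limits.comp_zero])
      · exact Or.inr (by haveI := hf; haveI := hg; infer_instance)⟩
  id_comp f := Subtype.ext (Category.id_comp f.1)
  comp_id f := Subtype.ext (Category.comp_id f.1)
  assoc f g h := Subtype.ext (Category.assoc f.1 g.1 h.1)

/-- the inclusion `M₀(B) ⥤ B`. -/
@[simps] def M0.incl : M0 B ⥤ B where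
  obj a := a
  map f := f.1

end M0

section Theta

variable {k : Type} [CommRing k] (B : Type*) [Category B] [Limits.HasZeroMorphisms B]

/-- `θ`, the restriction functor along `M₀(B) ⥤ B`. -/
def theta (k : Type) [CommRing k] : (B ⥤ ModuleCat k) ⥤ (M0 B ⥤ ModuleCat k) :=
  (Functor.whiskeringLeft (M0 B) B (ModuleCat k)).obj (M0.incl B)

end Theta

section RM

variable {k : Type} [CommRing k] {A : Type*} [Category A] [Preadditive A]
  [Limits.HasFiniteBiproducts A]

/-- condition `(RM)^d` : the restriction of the cross effect to `M₀(A)` is a split mono. -/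
def RM (d : ℕ) (F : A ⥤ ModuleCat k) : Prop :=
  ∃ r : (theta A k).obj (tFun A d ⋙ F) ⟶ (theta A k).obj F,
    (theta A k).map (crNat d F) ≫ r = 𝟙 _

end RM

noncomputable section

variable {k : Type} [CommRing k] {A : Type} [SmallCategory A] [Preadditive A]
  [Limits.HasFiniteBiproducts A]

/-- `κ_d F = coker(cr_d F)` in the abelian functor category. -/
def kappa (d : ℕ) (F : A ⥤ ModuleCat k) : A ⥤ ModuleCat k := cokernel (crNat d F)

/-!
By induction on `i` it suffices that `(RM)^d` gives injectivity of `cr_d F` (a retraction on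
`M₀(A)` is in particular a pointwise retraction) and passes from `F` to `κ_d F`.
A retraction `ρ` of `cr_d F` induces the retraction `a ↦ F(swap) ≫ ρ(t_d a)` of `cr_d (τ_d F)`,
where `swap` exchanges the two biproduct levels of `t_d (t_d a)`. The pair of retractions is
compatible with `cr_d F : F ⟶ τ_d F`, because `ρ` is natural along the maps `u_I`, which are zero
or split monomorphisms. Restriction to `M₀(A)` preserves cokernels, so the retraction of
`cr_d (τ_d F)` descends to a retraction of `cr_d (κ_d F)`.
-/

lemma CategoryTheory.Functor.map_eq_zero_or_isSplitMono {B B' : Type*} [Category B]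
    [HasZeroMorphisms B] [Category B'] [HasZeroMorphisms B'] (G : B ⥤ B')
    [G.PreservesZeroMorphisms] {a b : B} {f : a ⟶ b} (hf : f = 0 ∨ IsSplitMono f) :
    G.map f = 0 ∨ IsSplitMono (G.map f) :=
  hf.imp (fun h => by rw [h, G.map_zero]) fun h => .mk' (h.exists_splitMono.some.map G)

section TFun

variable {C : Type*} [Category C] [Preadditive C] [HasFiniteBiproducts C]

-- `biproduct.π` retyped through `tFun`: the two types agree only after unfolding `tFun`,
-- which `simp` and `rw` do not do.
def tFunπ (d : ℕ) (a : C) (i : Fin (d + 1)) : (tFun C d).obj a ⟶ a := biproduct.π _ i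

lemma tFun_hom_ext {d : ℕ} {X a : C} {f g : X ⟶ (tFun C d).obj a}
    (h : ∀ i, f ≫ tFunπ d a i = g ≫ tFunπ d a i) : f = g :=
  biproduct.hom_ext _ _ h

@[simp]
lemma tFun_map_tFunπ (d : ℕ) {a b : C} (f : a ⟶ b) (i : Fin (d + 1)) :
    (tFun C d).map f ≫ tFunπ d b i = tFunπ d a i ≫ f :=
  biproduct.map_π (fun _ => f) i

@[simp]
lemma tFun_map_tFunπ_assoc (d : ℕ) {a b Z : C} (f : a ⟶ b) (i : Fin (d + 1)) (h : b ⟶ Z) :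
    (tFun C d).map f ≫ tFunπ d b i ≫ h = tFunπ d a i ≫ f ≫ h := by
  simpa only [Category.assoc] using congrArg (· ≫ h) (tFun_map_tFunπ d f i)

@[simp]
lemma uNat_app_tFunπ (d : ℕ) (I : Finset (Fin (d + 1))) (a : C) (i : Fin (d + 1)) :
    (uNat C d I).app a ≫ tFunπ d a i = if i ∈ I then 𝟙 a else 0 :=
  biproduct.lift_π _ _

@[simp]
lemma uNat_app_tFunπ_assoc (d : ℕ) (I : Finset (Fin (d + 1))) {a Z : C} (i : Fin (d + 1))
    (h : a ⟶ Z) : (uNat C d I).app a ≫ tFunπ d a i ≫ h = if i ∈ I then h else 0 := by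
  rw [← Category.assoc, uNat_app_tFunπ]
  split_ifs <;> simp

instance (d : ℕ) : (tFun C d).PreservesZeroMorphisms where
  map_zero _ _ := tFun_hom_ext fun _ => by simp [-tFun_map]

lemma uNat_app_eq_zero_or_isSplitMono (d : ℕ) (I : Finset (Fin (d + 1))) (a : C) :
    (uNat C d I).app a = 0 ∨ IsSplitMono ((uNat C d I).app a) := by
  rcases I.eq_empty_or_nonempty with rfl | ⟨i, hi⟩
  · exact Or.inl (tFun_hom_ext fun _ => by simp [-uNat_app])
  · exact Or.inr ⟨⟨⟨tFunπ d a i, by simp [hi, -uNat_app]⟩⟩⟩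

def swapMap (d : ℕ) (a : C) :
    (tFun C d).obj ((tFun C d).obj a) ⟶ (tFun C d).obj ((tFun C d).obj a) :=
  biproduct.lift fun i => biproduct.lift fun j => tFunπ d _ j ≫ tFunπ d a i

@[simp]
lemma swapMap_tFunπ_tFunπ (d : ℕ) (a : C) (i j : Fin (d + 1)) :
    swapMap d a ≫ tFunπ d _ i ≫ tFunπ d a j = tFunπ d _ j ≫ tFunπ d a i :=
  (biproduct.lift_π_assoc _ _ _).trans (biproduct.lift_π _ _)

@[simp]
lemma swapMap_tFunπ_tFunπ_assoc (d : ℕ) {a Z : C} (i j : Fin (d + 1)) (h : a ⟶ Z) :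
    swapMap d a ≫ tFunπ d _ i ≫ tFunπ d a j ≫ h = tFunπ d _ j ≫ tFunπ d a i ≫ h := by
  simpa only [Category.assoc] using congrArg (· ≫ h) (swapMap_tFunπ_tFunπ d a i j)

lemma swapMap_comp_swapMap (d : ℕ) (a : C) : swapMap d a ≫ swapMap d a = 𝟙 _ :=
  tFun_hom_ext fun i => tFun_hom_ext fun j => by simp

lemma swapMap_natural (d : ℕ) {a b : C} (f : a ⟶ b) :
    (tFun C d).map ((tFun C d).map f) ≫ swapMap d b
      = swapMap d a ≫ (tFun C d).map ((tFun C d).map f) :=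
  tFun_hom_ext fun i => tFun_hom_ext fun j => by simp [-tFun_map]

lemma uNat_app_comp_swapMap (d : ℕ) (I : Finset (Fin (d + 1))) (a : C) :
    (uNat C d I).app ((tFun C d).obj a) ≫ swapMap d a = (tFun C d).map ((uNat C d I).app a) :=
  tFun_hom_ext fun i => tFun_hom_ext fun j => by
    by_cases h : j ∈ I <;> simp [h, -tFun_map, -uNat_app]

end TFun

section CrossEffect

variable {C : Type*} [Category C] [Preadditive C] [HasFiniteBiproducts C]
  {D : Type*} [Category D] [Preadditive D]

lemma crNat_naturality (d : ℕ) {F G : C ⥤ D} (φ : F ⟶ G) :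
    φ ≫ crNat d G = crNat d F ≫ Functor.whiskerLeft (tFun C d) φ := by
  ext a
  simp only [NatTrans.comp_app, crNat_app, Functor.whiskerLeft_app, Preadditive.comp_sum,
    Preadditive.sum_comp, Preadditive.comp_zsmul, Preadditive.zsmul_comp, φ.naturality]
  rfl

lemma crNat_comp_tFun_app (d : ℕ) (F : C ⥤ D) (a : C) :
    (crNat d (tFun C d ⋙ F)).app a
      = (crNat d F).app ((tFun C d).obj a) ≫ F.map (swapMap d a) := by
  simp only [crNat_app, Functor.comp_map, Preadditive.sum_comp, Preadditive.zsmul_comp,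
    ← F.map_comp, uNat_app_comp_swapMap]

end CrossEffect

section M0Natural

variable {B : Type*} [Category B] [HasZeroMorphisms B] {X Y : B ⥤ ModuleCat k}

def IsM0Natural (ρ : ∀ a : B, X.obj a ⟶ Y.obj a) : Prop :=
  ∀ ⦃a b : B⦄ (f : a ⟶ b), f = 0 ∨ IsSplitMono f → X.map f ≫ ρ b = ρ a ≫ Y.map f

def theta.homMk (ρ : ∀ a : B, X.obj a ⟶ Y.obj a) (hρ : IsM0Natural ρ) :
    (theta B k).obj X ⟶ (theta B k).obj Y where
  app a := ρ a
  naturality _ _ f := hρ f.1 f.2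

instance : (theta B k).PreservesZeroMorphisms where
  map_zero _ _ := by ext; rfl

end M0Natural

section Retraction

variable {C : Type*} [Category C] [Preadditive C] [HasFiniteBiproducts C] {d : ℕ}
  {F G : C ⥤ ModuleCat k}

lemma RM.exists_retraction (hF : RM d F) :
    ∃ ρ : ∀ a, F.obj ((tFun C d).obj a) ⟶ F.obj a,
      IsM0Natural (X := tFun C d ⋙ F) ρ ∧ ∀ a, (crNat d F).app a ≫ ρ a = 𝟙 _ := by
  obtain ⟨r, hr⟩ := hF
  exact ⟨fun a => r.app a, fun a b f hf => r.naturality (X := a) (Y := b) ⟨f, hf⟩,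
    fun a => congr_arg (fun η => η.app a) hr⟩

lemma mono_crNat_of_RM (hF : RM d F) : Mono (crNat d F) := by
  obtain ⟨ρ, -, hρ⟩ := hF.exists_retraction
  have (a : C) : IsSplitMono ((crNat d F).app a) := ⟨⟨⟨ρ a, hρ a⟩⟩⟩
  exact NatTrans.mono_of_mono_app _

lemma IsM0Natural.crNat_comp_tFun_app_comp {ρ : ∀ a, F.obj ((tFun C d).obj a) ⟶ G.obj a}
    (hρ : IsM0Natural (X := tFun C d ⋙ F) ρ) (a : C) :
    (crNat d (tFun C d ⋙ F)).app a ≫ ρ ((tFun C d).obj a) = ρ a ≫ (crNat d G).app a := by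
  simp only [crNat_app, Preadditive.sum_comp, Preadditive.comp_sum, Preadditive.zsmul_comp,
    Preadditive.comp_zsmul, hρ _ (uNat_app_eq_zero_or_isSplitMono d _ a), Functor.id_obj]

def swapRetraction (ρ : ∀ a, F.obj ((tFun C d).obj a) ⟶ G.obj a) (a : C) :
    F.obj ((tFun C d).obj ((tFun C d).obj a)) ⟶ G.obj ((tFun C d).obj a) :=
  F.map (swapMap d a) ≫ ρ ((tFun C d).obj a)

lemma isM0Natural_swapRetraction {ρ : ∀ a, F.obj ((tFun C d).obj a) ⟶ G.obj a}
    (hρ : IsM0Natural (X := tFun C d ⋙ F) ρ) :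
    IsM0Natural (X := tFun C d ⋙ tFun C d ⋙ F) (Y := tFun C d ⋙ G) (swapRetraction ρ) := by
  intro a b f hf
  dsimp only [swapRetraction, Functor.comp_map]
  rw [← F.map_comp_assoc, swapMap_natural, F.map_comp_assoc, Category.assoc]
  exact congrArg _ (hρ _ ((tFun C d).map_eq_zero_or_isSplitMono hf))

lemma crNat_comp_tFun_app_comp_swapRetraction {ρ : ∀ a, F.obj ((tFun C d).obj a) ⟶ F.obj a}
    (hρ : ∀ a, (crNat d F).app a ≫ ρ a = 𝟙 _) (a : C) :
    (crNat d (tFun C d ⋙ F)).app a ≫ swapRetraction ρ a = 𝟙 _ := by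
  rw [crNat_comp_tFun_app, swapRetraction, Category.assoc, ← F.map_comp_assoc,
    swapMap_comp_swapMap, F.map_id, Category.id_comp]
  exact hρ _

lemma crNat_app_comp_swapRetraction {ρ : ∀ a, F.obj ((tFun C d).obj a) ⟶ G.obj a}
    (hρ : IsM0Natural (X := tFun C d ⋙ F) ρ) (a : C) :
    (crNat d F).app ((tFun C d).obj a) ≫ swapRetraction ρ a = ρ a ≫ (crNat d G).app a := by
  rw [swapRetraction, ← Category.assoc, ← crNat_comp_tFun_app, hρ.crNat_comp_tFun_app_comp]

lemma exists_theta_whiskerLeft_cokernelπ_comp_eq {Z : M0 C ⥤ ModuleCat k} (φ : F ⟶ G)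
    (g : (theta C k).obj (tFun C d ⋙ G) ⟶ Z)
    (hg : (theta C k).map (Functor.whiskerLeft (tFun C d) φ) ≫ g = 0) :
    ∃ s : (theta C k).obj (tFun C d ⋙ cokernel φ) ⟶ Z,
      (theta C k).map (Functor.whiskerLeft (tFun C d) (cokernel.π φ)) ≫ s = g :=
  let W := (Functor.whiskeringLeft (M0 C) C (ModuleCat k)).obj (M0.incl C ⋙ tFun C d)
  let s := CokernelCofork.IsColimit.desc' (isColimitOfHasCokernelOfPreservesColimit W φ) g hg
  ⟨s.1, s.2⟩

lemma RM_cokernel_of_compatible (φ : F ⟶ G)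
    (rF : (theta C k).obj (tFun C d ⋙ F) ⟶ (theta C k).obj F)
    (rG : (theta C k).obj (tFun C d ⋙ G) ⟶ (theta C k).obj G)
    (hG : (theta C k).map (crNat d G) ≫ rG = 𝟙 _)
    (hφ : (theta C k).map (Functor.whiskerLeft (tFun C d) φ) ≫ rG = rF ≫ (theta C k).map φ) :
    RM d (cokernel φ) := by
  let π := cokernel.π φ
  obtain ⟨s, hs⟩ := exists_theta_whiskerLeft_cokernelπ_comp_eq φ (rG ≫ (theta C k).map π) <| by
    rw [← Category.assoc, hφ, Category.assoc, ← Functor.map_comp, cokernel.condition,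
      Functor.map_zero, comp_zero]
  have : Epi ((theta C k).map π) :=
    ((Functor.whiskeringLeft (M0 C) C (ModuleCat k)).obj (M0.incl C)).map_epi π
  refine ⟨s, (cancel_epi ((theta C k).map π)).1 ?_⟩
  rw [← Functor.map_comp_assoc, crNat_naturality, Functor.map_comp, Category.assoc, hs,
    ← Category.assoc, hG, Category.id_comp, Category.comp_id]

end Retraction

lemma RM.kappa {d : ℕ} {F : A ⥤ ModuleCat k} (hF : RM d F) : RM d (kappa d F) := by
  obtain ⟨ρ, hnat, hret⟩ := hF.exists_retraction
  exact RM_cokernel_of_compatible (crNat d F) (theta.homMk ρ hnat)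
    (theta.homMk (swapRetraction ρ) (isM0Natural_swapRetraction hnat))
    (NatTrans.ext <| funext fun a =>
      crNat_comp_tFun_app_comp_swapRetraction (C := A) hret a)
    (NatTrans.ext <| funext fun a => crNat_app_comp_swapRetraction (C := A) hnat a)

/-- `(RM)^d` implies `(AH)^d` : all cross effects of the iterated `κ_d` are injective. -/
theorem stmt10 (d : ℕ) (F : A ⥤ ModuleCat k) (hF : RM d F) :
    ∀ i : ℕ, Mono (crNat d ((kappa (k := k) (A := A) d)^[i] F)) := by
  intro i
  induction i generalizing F with
  | zero => exact mono_crNat_of_RM hF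
  | succ n ih => exact ih _ hF.kappa
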